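/- Let G be a group such that the derived subgroup G' is finite and G/Z(G) can be generated by d elements. Then IA(G)* is finite and |IA(G)*| ≤ |G'|^d. -/

import Mathlib

/-! An element of `IA(G)*` is determined by its values on lifts `g₁, …, g_d` of generators of
`G/Z(G)`: two such automorphisms agreeing there agree on `Z(G)` and on the `gᵢ`, hence on
all of `G`. Since `gᵢ⁻¹ α(gᵢ) ∈ G'`, the map `α ↦ (gᵢ⁻¹ α(gᵢ))ᵢ` embeds `IA(G)*` into `G'ᵈ`. -/

/-- The group of IA-automorphisms of `G` fixing the center elementwise. -/
def IAstar (G : Type*) [Group G] : Subgroup (MulAut G) where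
  carrier := {α | (∀ g : G, g⁻¹ * α g ∈ commutator G) ∧ ∀ z ∈ Subgroup.center G, α z = z}
  one_mem' := by
    constructor
    · intro g; simp
    · intro z _; rfl
  mul_mem' := by
    rintro α β ⟨hα, hα'⟩ ⟨hβ, hβ'⟩
    constructor
    · intro g
      have h : g⁻¹ * (α * β) g = (g⁻¹ * β g) * ((β g)⁻¹ * α (β g)) := by
        simp [MulAut.mul_apply, mul_assoc]
      rw [h]
      exact mul_mem (hβ g) (hα (β g))
    · intro z hz
      simp [MulAut.mul_apply, hβ' z hz, hα' z hz]
  inv_mem' := by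
    rintro α ⟨hα, hα'⟩
    constructor
    · intro g
      have h := hα (α⁻¹ g)
      rw [MulAut.apply_inv_self] at h
      simpa using inv_mem h
    · intro z hz
      have h := congrArg (fun x => α⁻¹ x) (hα' z hz)
      simp only [MulAut.inv_apply_self] at h
      exact h.symm

namespace MonoidHom

variable {G M : Type*} [Group G] [Monoid M]

theorem eq_of_eqOn_of_closure_mk_eq_top {N : Subgroup G} [N.Normal] {f g : G →* M}
    (hN : Set.EqOn f g N) {T : Set G}
    (hT : Subgroup.closure ((QuotientGroup.mk' N) '' T) = ⊤) (hfg : Set.EqOn f g T) :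
    f = g := by
  have hker : (QuotientGroup.mk' N).ker ≤ f.eqLocus g := by
    rw [QuotientGroup.ker_mk']
    exact fun x hx => hN hx
  have hmap : (f.eqLocus g).map (QuotientGroup.mk' N) = ⊤ := by
    rw [eq_top_iff, ← hT, Subgroup.closure_le]
    rintro _ ⟨x, hx, rfl⟩
    exact ⟨x, hfg hx, rfl⟩
  have htop : f.eqLocus g = ⊤ := by
    rw [← Subgroup.comap_map_eq_self hker, hmap, Subgroup.comap_top]
  exact ext fun x => (htop ▸ Subgroup.mem_top x : x ∈ f.eqLocus g)

end MonoidHom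

namespace IAstar

variable {G : Type*} [Group G] (S : Set (G ⧸ Subgroup.center G))

theorem ext_of_apply_out_eq (hS : Subgroup.closure S = ⊤) {α β : IAstar G}
    (h : ∀ s ∈ S, (α : MulAut G) s.out = (β : MulAut G) s.out) : α = β := by
  have hcenter : Set.EqOn (α : MulAut G).toMonoidHom (β : MulAut G).toMonoidHom
      (Subgroup.center G) := fun z hz => (α.2.2 z hz).trans (β.2.2 z hz).symm
  have hlifts : (QuotientGroup.mk' (Subgroup.center G)) '' (Quotient.out '' S) = S := by
    rw [Set.image_image]
    exact Set.image_congr (fun s _ => QuotientGroup.out_eq' s) |>.trans (Set.image_id S)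
  have hαβ := MonoidHom.eq_of_eqOn_of_closure_mk_eq_top hcenter (hlifts ▸ hS)
    (by rintro _ ⟨s, hs, rfl⟩; exact h s hs)
  exact Subtype.ext (MulEquiv.ext fun x => DFunLike.congr_fun hαβ x)

noncomputable def displacement (α : IAstar G) (s : S) : commutator G :=
  ⟨(s.1.out)⁻¹ * (α : MulAut G) s.1.out, α.2.1 _⟩

theorem displacement_injective (hS : Subgroup.closure S = ⊤) :
    Function.Injective (displacement S) := by
  intro α β h
  exact ext_of_apply_out_eq S hS fun s hs =>
    mul_left_cancel (congrArg Subtype.val (congrFun h ⟨s, hs⟩))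

end IAstar

theorem card_IAstar_le (G : Type*) [Group G] [Finite (commutator G)] (d : ℕ)
    (hgen : ∃ S : Finset (G ⧸ Subgroup.center G), S.card ≤ d ∧
      Subgroup.closure (S : Set (G ⧸ Subgroup.center G)) = ⊤) :
    Finite (IAstar G) ∧ Nat.card (IAstar G) ≤ Nat.card (commutator G) ^ d := by
  obtain ⟨S, hcard, hS⟩ := hgen
  have hinj := IAstar.displacement_injective (S : Set (G ⧸ Subgroup.center G)) hS
  refine ⟨Finite.of_injective _ hinj, ?_⟩
  calc Nat.card (IAstar G)
      ≤ Nat.card (Set.Elem (S : Set (G ⧸ Subgroup.center G)) → commutator G) :=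
        Nat.card_le_card_of_injective _ hinj
    _ = Nat.card (commutator G) ^ S.card := by
        rw [Nat.card_fun, Nat.card_coe_set_eq, Set.ncard_coe_finset]
    _ ≤ Nat.card (commutator G) ^ d := Nat.pow_le_pow_right Nat.card_pos hcard
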